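/- arXiv:2303.05767 — 9 statements merged into one kernel-verified Lean document; each statement's English description precedes it below -/
import Mathlib

section
/- If H ⊆ ℕ is a Δ_r*-set with r ≥ 2, then the lower asymptotic density of H is at least (1/r)·∏_{p ≤ r-1, p prime} (1 - 1/p), i.e. liminf_{N→∞} |H ∩ [1,N]|/N ≥ (1/r)·∏_{p ≤ r-1} (1 - 1/p). -/
open Finset Filter

lemma deltaRStar_count (H : Set ℕ) [DecidablePred (· ∈ H)] (r : ℕ) (hr : 2 ≤ r)
    (hH : ∀ S : Finset ℕ, r ≤ S.card →
      ∃ d ∈ H, ∃ x ∈ S, ∃ y ∈ S, y < x ∧ d = x - y) (N : ℕ) :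
    N + 1 ≤ (r - 1) * (1 + 2 * ((Finset.Icc 1 N).filter (· ∈ H)).card) := by
  classical
  set F := (Finset.Icc 1 N).filter (· ∈ H) with hF
  set P : Finset ℕ → Prop := fun T => ∀ x ∈ T, ∀ y ∈ T, y < x → (x - y) ∉ H with hP
  set C := (Finset.range (N+1)).powerset.filter P with hC
  have hne : C.Nonempty := ⟨∅, by simp [hC, hP]⟩
  obtain ⟨T, hTC, hTmax⟩ := C.exists_max_image Finset.card hne
  have hTsub : T ⊆ Finset.range (N+1) :=
    Finset.mem_powerset.1 (Finset.mem_filter.1 hTC).1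
  have hTP : P T := (Finset.mem_filter.1 hTC).2
  have hTcard : T.card ≤ r - 1 := by
    by_contra hcon
    have hrT : r ≤ T.card := by omega
    obtain ⟨d, hd, x, hx, y, hy, hyx, hdxy⟩ := hH T hrT
    exact hTP x hx y hy hyx (hdxy ▸ hd)
  -- covering
  have hcover : Finset.range (N+1) ⊆
      T ∪ ((T ×ˢ F).image (fun p => p.1 + p.2)) ∪ ((T ×ˢ F).image (fun p => p.1 - p.2)) := by
    intro n hn
    by_cases hnT : n ∈ T
    · exact Finset.mem_union_left _ (Finset.mem_union_left _ hnT)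
    · have hT' : insert n T ⊆ Finset.range (N+1) := by
        intro m hm
        rcases Finset.mem_insert.1 hm with h | h
        · exact h ▸ hn
        · exact hTsub h
      have hnotP : ¬ P (insert n T) := by
        intro hP'
        have : insert n T ∈ C := Finset.mem_filter.2 ⟨Finset.mem_powerset.2 hT', hP'⟩
        have := hTmax _ this
        have := Finset.card_insert_of_notMem hnT
        omega
      simp only [hP, not_forall] at hnotP
      obtain ⟨x, hx, y, hy, hyx, hdH⟩ := hnotP
      have hxN : x ≤ N := by
        have := hT' hx; simp [Finset.mem_range] at this; omega
      have hdF : x - y ∈ F := by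
        rw [hF, Finset.mem_filter, Finset.mem_Icc]
        exact ⟨⟨by omega, by omega⟩, by simpa using hdH⟩
      rcases Finset.mem_insert.1 hx with hx' | hx'
      · -- x = n, so y ∈ T and n = y + (x - y)
        have hyT : y ∈ T := by
          rcases Finset.mem_insert.1 hy with h | h
          · omega
          · exact h
        apply Finset.mem_union_left
        apply Finset.mem_union_right
        apply Finset.mem_image.2
        exact ⟨(y, x - y), Finset.mem_product.2 ⟨hyT, hdF⟩, by simp; omega⟩
      · rcases Finset.mem_insert.1 hy with hy' | hy'
        · -- y = n, x ∈ T, n = x - (x - y)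
          apply Finset.mem_union_right
          apply Finset.mem_image.2
          exact ⟨(x, x - y), Finset.mem_product.2 ⟨hx', hdF⟩, by simp; omega⟩
        · exact absurd (hTP x hx' y hy' hyx) (fun h => h (by simpa using hdH))
  have hle := Finset.card_le_card hcover
  rw [Finset.card_range] at hle
  have h1 : (T ∪ ((T ×ˢ F).image (fun p => p.1 + p.2)) ∪
      ((T ×ˢ F).image (fun p => p.1 - p.2))).card ≤
      T.card + T.card * F.card + T.card * F.card := by
    calc _ ≤ (T ∪ (T ×ˢ F).image (fun p => p.1 + p.2)).card
              + ((T ×ˢ F).image (fun p => p.1 - p.2)).card := Finset.card_union_le _ _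
      _ ≤ T.card + ((T ×ˢ F).image (fun p => p.1 + p.2)).card
              + ((T ×ˢ F).image (fun p => p.1 - p.2)).card := by
            have := Finset.card_union_le T ((T ×ˢ F).image (fun p => p.1 + p.2))
            omega
      _ ≤ T.card + T.card * F.card + T.card * F.card := by
            have h2 := Finset.card_image_le (s := T ×ˢ F) (f := fun p => p.1 + p.2)
            have h3 := Finset.card_image_le (s := T ×ˢ F) (f := fun p => p.1 - p.2)
            rw [Finset.card_product] at h2 h3
            omega
  have : N + 1 ≤ T.card * (1 + 2 * F.card) := by
    have := hle.trans h1; ring_nf; ring_nf at this; omega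
  calc N + 1 ≤ T.card * (1 + 2 * F.card) := this
    _ ≤ (r - 1) * (1 + 2 * F.card) := Nat.mul_le_mul_right _ hTcard

theorem deltaRStar_density (H : Set ℕ) (r : ℕ) (hr : 2 ≤ r)
    (hH : ∀ S : Finset ℕ, r ≤ S.card →
      ∃ d ∈ H, ∃ x ∈ S, ∃ y ∈ S, y < x ∧ d = x - y) :
    (1 / (r : ℝ)) * ∏ p ∈ (Finset.Icc 1 (r - 1)).filter Nat.Prime, (1 - 1 / (p : ℝ))
      ≤ Filter.liminf
          (fun N : ℕ => (Nat.card ↥(H ∩ Set.Icc 1 N) : ℝ) / (N : ℝ)) Filter.atTop := by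
  classical
  set f : ℕ → ℝ := fun N => (Nat.card ↥(H ∩ Set.Icc 1 N) : ℝ) / (N : ℝ) with hf
  set R : ℝ := (r : ℝ) with hR
  have hR2 : (2:ℝ) ≤ R := by rw [hR]; exact_mod_cast hr
  -- identify Nat.card with Finset card
  have hcard : ∀ N : ℕ, (Nat.card ↥(H ∩ Set.Icc 1 N) : ℝ)
      = (((Finset.Icc 1 N).filter (· ∈ H)).card : ℝ) := by
    intro N
    congr 1
    have hset : H ∩ Set.Icc 1 N = ↑((Finset.Icc 1 N).filter (· ∈ H)) := by
      ext x
      simp only [Set.mem_inter_iff, Set.mem_Icc, Finset.coe_filter, Finset.mem_Icc,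
        Set.mem_setOf_eq]
      tauto
    rw [hset, Nat.card_coe_set_eq, Set.ncard_coe_finset]
  -- the auxiliary lower bound function
  set g : ℕ → ℝ := fun N => ((N:ℝ) + 2 - R) / (2*(R-1)*(N:ℝ)) with hg
  have hRpos : (0:ℝ) < R - 1 := by linarith
  have hglim : Tendsto g atTop (nhds (1/(2*(R-1)))) := by
    have h1 : Tendsto (fun N : ℕ => 1/(2*(R-1)) + ((2 - R)/(2*(R-1))) * (1/(N:ℝ)))
        atTop (nhds (1/(2*(R-1)))) := by
      have := (tendsto_one_div_atTop_nhds_zero_nat).const_mul ((2 - R)/(2*(R-1)))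
      have h2 := tendsto_const_nhds (x := 1/(2*(R-1))) (f := atTop (α := ℕ))
      simpa using h2.add this
    apply h1.congr'
    filter_upwards [eventually_ge_atTop 1] with N hN
    have hNpos : (0:ℝ) < (N:ℝ) := by exact_mod_cast hN
    rw [hg]
    field_simp
    ring
  have hgf : ∀ᶠ N in atTop, g N ≤ f N := by
    filter_upwards [eventually_ge_atTop 1] with N hN
    have hNpos : (0:ℝ) < (N:ℝ) := by exact_mod_cast hN
    have hkey := deltaRStar_count H r hr hH N
    set K : ℝ := (((Finset.Icc 1 N).filter (· ∈ H)).card : ℝ) with hK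
    have hkeyR : (N:ℝ) + 1 ≤ (R - 1) * (1 + 2 * K) := by
      have : ((r - 1 : ℕ) : ℝ) = R - 1 := by
        rw [hR, Nat.cast_sub (by omega : 1 ≤ r), Nat.cast_one]
      calc (N:ℝ) + 1 ≤ (((r - 1) * (1 + 2 * ((Finset.Icc 1 N).filter (· ∈ H)).card) : ℕ) : ℝ) := by
            exact_mod_cast hkey
        _ = (R - 1) * (1 + 2 * K) := by push_cast [this]; ring
    simp only [hf, hg]
    rw [hcard N, ← hK]
    rw [div_le_div_iff₀ (by positivity) hNpos]
    nlinarith [mul_le_mul_of_nonneg_right (show (N:ℝ) + 2 - R ≤ 2*(R-1)*K by linarith) hNpos.le]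
  have hKbound : ∀ᶠ N in atTop, f N ≤ 1 := by
    filter_upwards [eventually_ge_atTop 1] with N hN
    have hNpos : (0:ℝ) < (N:ℝ) := by exact_mod_cast hN
    simp only [hf]
    rw [hcard N, div_le_one hNpos]
    have : ((Finset.Icc 1 N).filter (· ∈ H)).card ≤ N := by
      calc _ ≤ (Finset.Icc 1 N).card := Finset.card_filter_le _ _
        _ = N := by rw [Nat.card_Icc]; omega
    exact_mod_cast this
  have hliminf_g : liminf g atTop = 1/(2*(R-1)) := hglim.liminf_eq
  have hle : liminf g atTop ≤ liminf f atTop :=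
    liminf_le_liminf hgf hglim.isBoundedUnder_ge
      (isCoboundedUnder_ge_of_eventually_le _ hKbound)
  rw [hliminf_g] at hle
  refine le_trans ?_ hle
  -- now show target ≤ 1/(2*(R-1))
  rcases eq_or_lt_of_le hr with hr2 | hr3
  · -- r = 2
    subst hr2
    norm_num [Finset.Icc_self, Finset.filter_singleton, Nat.not_prime_one, hR]
  · -- r ≥ 3
    have hr3' : 3 ≤ r := hr3
    have h2mem : 2 ∈ (Finset.Icc 1 (r - 1)).filter Nat.Prime := by
      simp only [Finset.mem_filter, Finset.mem_Icc]
      exact ⟨⟨by omega, by omega⟩, Nat.prime_two⟩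
    have hprod : ∏ p ∈ (Finset.Icc 1 (r - 1)).filter Nat.Prime, (1 - 1 / (p : ℝ)) ≤ 1/2 := by
      rw [← Finset.mul_prod_erase _ _ h2mem]
      have hrest : ∏ p ∈ ((Finset.Icc 1 (r - 1)).filter Nat.Prime).erase 2,
          (1 - 1 / (p : ℝ)) ≤ 1 := by
        apply Finset.prod_le_one
        · intro p hp
          have hp' : p ∈ (Finset.Icc 1 (r - 1)).filter Nat.Prime := Finset.mem_erase.1 hp |>.2
          have hp1 : 1 ≤ p := (Finset.mem_Icc.1 (Finset.mem_filter.1 hp').1).1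
          have : (1:ℝ) ≤ (p:ℝ) := by exact_mod_cast hp1
          have : 1/(p:ℝ) ≤ 1 := by
            rw [div_le_one (by linarith)]; linarith
          linarith
        · intro p hp
          have hp' : p ∈ (Finset.Icc 1 (r - 1)).filter Nat.Prime := Finset.mem_erase.1 hp |>.2
          have hp1 : 1 ≤ p := (Finset.mem_Icc.1 (Finset.mem_filter.1 hp').1).1
          have : (1:ℝ) ≤ (p:ℝ) := by exact_mod_cast hp1
          have h0 : (0:ℝ) < (p:ℝ) := by linarith
          have : 0 ≤ 1/(p:ℝ) := by positivity
          linarith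
      have hrest0 : (0:ℝ) ≤ ∏ p ∈ ((Finset.Icc 1 (r - 1)).filter Nat.Prime).erase 2,
          (1 - 1 / (p : ℝ)) := by
        apply Finset.prod_nonneg
        intro p hp
        have hp' : p ∈ (Finset.Icc 1 (r - 1)).filter Nat.Prime := Finset.mem_erase.1 hp |>.2
        have hp1 : 1 ≤ p := (Finset.mem_Icc.1 (Finset.mem_filter.1 hp').1).1
        have : (1:ℝ) ≤ (p:ℝ) := by exact_mod_cast hp1
        have : 1/(p:ℝ) ≤ 1 := by rw [div_le_one (by linarith)]; linarith
        linarith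
      have : ((2:ℕ):ℝ) = 2 := by norm_num
      rw [this]
      nlinarith
    have hRpos' : (0:ℝ) < R := by linarith
    have hR3 : (3:ℝ) ≤ R := by rw [hR]; exact_mod_cast hr3'
    calc (1/R) * ∏ p ∈ (Finset.Icc 1 (r - 1)).filter Nat.Prime, (1 - 1 / (p : ℝ))
        ≤ (1/R) * (1/2) := by
          apply mul_le_mul_of_nonneg_left hprod (by positivity)
      _ = 1/(2*R) := by ring
      _ ≤ 1/(2*(R-1)) := one_div_le_one_div_of_le (by linarith) (by linarith)
end

section
/- If A ⊆ ℕ is an IP*-set, then for any positive integer m the dilate m·A = {m·x : x ∈ A} is again an IP*-set. -/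
/-- The set of finite sums of distinct terms of the sequence `x`. -/
def FS (x : ℕ → ℕ) : Set ℕ :=
  {n | ∃ H : Finset ℕ, H.Nonempty ∧ n = ∑ t ∈ H, x t}

/-- `A` is an IP*-set: it meets every IP-set. -/
def IPStar (A : Set ℕ) : Prop :=
  ∀ x : ℕ → ℕ, (∀ n, 0 < x n) → (A ∩ FS x).Nonempty

lemma key_block (x : ℕ → ℕ) (m : ℕ) (hm : 0 < m) (s : ℕ) :
    ∃ pq : ℕ × ℕ, s ≤ pq.1 ∧ pq.1 < pq.2 ∧ m ∣ ∑ i ∈ Finset.Ico pq.1 pq.2, x i := by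
  haveI : NeZero m := ⟨hm.ne'⟩
  have hcard : (Fintype.card (ZMod m)) < (Finset.range (m + 1)).card := by
    simp [ZMod.card m]
  obtain ⟨a, ha, b, hb, hab, heq⟩ :=
    Finset.exists_ne_map_eq_of_card_lt_of_maps_to hcard
      (f := fun k => ((∑ i ∈ Finset.Ico s (s + k), x i : ℕ) : ZMod m))
      (fun k _ => Finset.mem_univ _)
  wlog hlt : a < b generalizing a b
  · exact this b hb a ha hab.symm heq.symm (by omega)
  refine ⟨(s + a, s + b), by omega, by omega, ?_⟩
  have hsplit : ∑ i ∈ Finset.Ico s (s + a), x i + ∑ i ∈ Finset.Ico (s + a) (s + b), x i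
      = ∑ i ∈ Finset.Ico s (s + b), x i :=
    Finset.sum_Ico_consecutive _ (by omega) (by omega)
  have : ((∑ i ∈ Finset.Ico (s + a) (s + b), x i : ℕ) : ZMod m) = 0 := by
    have h2 := congrArg (fun n : ℕ => ((n : ZMod m))) hsplit
    simp only [Nat.cast_add] at h2
    rw [heq] at h2
    exact add_eq_left.mp h2
  exact (ZMod.natCast_eq_zero_iff _ _).mp this

theorem dilate_IPStar (A : Set ℕ) (hA : IPStar A) (m : ℕ) (hm : 0 < m) :
    IPStar ((fun a => m * a) '' A) := by
  intro x hx
  choose F hF1 hF2 hF3 using key_block x m hm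
  -- chain of blocks
  let P : ℕ → ℕ × ℕ := fun n => Nat.rec (F 0) (fun _ p => F p.2) n
  have hPlt : ∀ n, (P n).1 < (P n).2 := by
    intro n; cases n with
    | zero => exact hF2 0
    | succ k => exact hF2 _
  have hPchain : ∀ n, (P n).2 ≤ (P (n + 1)).1 := fun n => hF1 _
  have hPmono : ∀ {n k : ℕ}, n < k → (P n).2 ≤ (P k).1 := by
    intro n k hnk
    induction k with
    | zero => omega
    | succ j ih =>
      rcases Nat.lt_succ_iff_lt_or_eq.mp hnk with h | h
      · exact le_trans (ih h) (le_trans (hPlt j).le (hPchain j))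
      · subst h; exact hPchain n
  have hPdvd : ∀ n, m ∣ ∑ i ∈ Finset.Ico (P n).1 (P n).2, x i := by
    intro n; cases n with
    | zero => exact hF3 0
    | succ k => exact hF3 _
  set y : ℕ → ℕ := fun n => (∑ i ∈ Finset.Ico (P n).1 (P n).2, x i) / m with hy
  have hmy : ∀ n, m * y n = ∑ i ∈ Finset.Ico (P n).1 (P n).2, x i := by
    intro n; exact Nat.mul_div_cancel' (hPdvd n)
  have hypos : ∀ n, 0 < y n := by
    intro n
    have hsum : 0 < ∑ i ∈ Finset.Ico (P n).1 (P n).2, x i :=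
      Finset.sum_pos (fun i _ => hx i) ⟨(P n).1, Finset.mem_Ico.mpr ⟨le_refl _, hPlt n⟩⟩
    have hmyn : 0 < m * y n := by rw [hmy n]; exact hsum
    exact Nat.pos_of_ne_zero fun h0 => by simp [h0] at hmyn
  obtain ⟨a, haA, H, hH, ha⟩ := hA y hypos
  refine ⟨m * a, ⟨a, haA, rfl⟩, ?_⟩
  -- m * a ∈ FS x via disjoint union of blocks
  refine ⟨H.biUnion (fun t => Finset.Ico (P t).1 (P t).2), ?_, ?_⟩
  · obtain ⟨t, ht⟩ := hH
    exact ⟨(P t).1, Finset.mem_biUnion.mpr ⟨t, ht, Finset.mem_Ico.mpr ⟨le_refl _, hPlt t⟩⟩⟩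
  · have hdisj : ∀ t ∈ H, ∀ s ∈ H, t ≠ s →
        Disjoint (Finset.Ico (P t).1 (P t).2) (Finset.Ico (P s).1 (P s).2) := by
      intro t _ s _ hts
      rcases hts.lt_or_gt with h | h
      · exact Finset.Ico_disjoint_Ico_consecutive _ _ _ |>.mono_right
          (Finset.Ico_subset_Ico (hPmono h) le_rfl) |>.mono_left
          (Finset.Ico_subset_Ico le_rfl le_rfl)
      · exact (Finset.Ico_disjoint_Ico_consecutive _ _ _ |>.mono_right
          (Finset.Ico_subset_Ico (hPmono h) le_rfl)).symm
    rw [Finset.sum_biUnion hdisj]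
    calc m * a = m * ∑ t ∈ H, y t := by rw [ha]
    _ = ∑ t ∈ H, m * y t := Finset.mul_sum _ _ _
    _ = ∑ t ∈ H, ∑ i ∈ Finset.Ico (P t).1 (P t).2, x i := by
        exact Finset.sum_congr rfl fun t _ => hmy t
end

section
/- Let A ⊆ ℕ be an IP*-set and let FS(⟨x_n⟩) be any IP-set. Then there exists a sub-IP-set FS(⟨y_n⟩) of FS(⟨x_n⟩) contained in A, where each y_i = ∑_{t∈H_i} x_t for pairwise disjoint nonempty finite sets H_i. -/
/-- Auxiliary commutative monoid: a natural number together with a finite set of indices;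
addition adds the numbers and unions the index sets. -/
structure NF where
  n : ℕ
  H : Finset ℕ

instance : Zero NF := ⟨⟨0, ∅⟩⟩
instance : Add NF := ⟨fun a b => ⟨a.n + b.n, a.H ∪ b.H⟩⟩

@[simp] lemma NF.add_n (a b : NF) : (a + b).n = a.n + b.n := rfl
@[simp] lemma NF.add_H (a b : NF) : (a + b).H = a.H ∪ b.H := rfl
@[simp] lemma NF.zero_n : (0 : NF).n = 0 := rfl
@[simp] lemma NF.zero_H : (0 : NF).H = ∅ := rfl

lemma NF.ext' {a b : NF} (h1 : a.n = b.n) (h2 : a.H = b.H) : a = b := by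
  cases a; cases b; simp_all

instance : AddCommMonoid NF where
  add_assoc a b c := NF.ext' (by simp [Nat.add_assoc]) (by simp [Finset.union_assoc])
  zero_add a := NF.ext' (by simp) (by simp)
  add_zero a := NF.ext' (by simp) (by simp)
  add_comm a b := NF.ext' (by simp [Nat.add_comm]) (by simp [Finset.union_comm])
  nsmul := nsmulRec

lemma NF.sum_n (G : Finset ℕ) (f : ℕ → NF) :
    (∑ i ∈ G, f i).n = ∑ i ∈ G, (f i).n := by
  induction G using Finset.cons_induction with
  | empty => simp
  | cons a s ha ih => simp [Finset.sum_insert ha, ih]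

lemma NF.sum_H (G : Finset ℕ) (f : ℕ → NF) :
    (∑ i ∈ G, f i).H = G.biUnion fun i => (f i).H := by
  induction G using Finset.cons_induction with
  | empty => simp
  | cons a s ha ih =>
    simp [Finset.sum_insert ha, ih, Finset.biUnion_insert]

/-- Every element of a Hindman FS-set is a sum of terms of the stream over a nonempty
finite index set. -/
lemma FS_mem_rep {M} [AddCommMonoid M] {a : Stream' M} {m : M} (h : m ∈ Hindman.FS a) :
    ∃ K : Finset ℕ, K.Nonempty ∧ m = ∑ t ∈ K, a.get t := by
  induction h with
  | head' a => exact ⟨{0}, Finset.singleton_nonempty 0, by simp [Stream'.head]⟩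
  | tail' a m _ ih =>
    obtain ⟨K, hK, hm⟩ := ih
    refine ⟨K.image (· + 1), hK.image _, ?_⟩
    rw [Finset.sum_image (by intro u _ v _ h; simpa using h)]
    simpa [Stream'.tail, Stream'.get] using hm
  | cons' a m _ ih =>
    obtain ⟨K, hK, hm⟩ := ih
    refine ⟨insert 0 (K.image (· + 1)), Finset.insert_nonempty _ _, ?_⟩
    rw [Finset.sum_insert (by simp), Finset.sum_image (by intro u _ v _ h; simpa using h)]
    have h2 : ∑ t ∈ K, a.get (t + 1) = ∑ t ∈ K, a.tail.get t := rfl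
    rw [h2, ← hm]

theorem IPStar_contains_subIP (A : Set ℕ) (hA : IPStar A)
    (x : ℕ → ℕ) (hx : ∀ n, 0 < x n) :
    ∃ H : ℕ → Finset ℕ, (∀ i, (H i).Nonempty) ∧
      (Pairwise fun i j => Disjoint (H i) (H j)) ∧
      FS (fun i => ∑ t ∈ H i, x t) ⊆ FS x ∧
      FS (fun i => ∑ t ∈ H i, x t) ⊆ A := by
  classical
  -- the stream in NF
  set a : Stream' NF := fun n => ⟨x n, {n}⟩ with ha
  set c1 : Set NF := {p | p ∈ Hindman.FS a ∧ p.n ∈ A} with hc1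
  set c2 : Set NF := {p | p ∈ Hindman.FS a ∧ p.n ∉ A} with hc2
  have hcov : Hindman.FS a ⊆ ⋃₀ {c1, c2} := by
    intro p hp
    by_cases h : p.n ∈ A
    · exact ⟨c1, by simp, hp, h⟩
    · exact ⟨c2, by simp, hp, h⟩
  obtain ⟨c, hcs, b, hb⟩ :=
    Hindman.FS_partition_regular a {c1, c2} (Set.toFinite _) hcov
  have hcsub : c ⊆ Hindman.FS a := by
    rcases hcs with rfl | rfl
    · exact fun p hp => hp.1
    · intro p hp; exact hp.1
  set y : ℕ → ℕ := fun i => (b.get i).n with hy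
  set K : ℕ → Finset ℕ := fun i => (b.get i).H with hK
  -- key claim: sums over nonempty finsets of the stream b
  have claim : ∀ G : Finset ℕ, G.Nonempty →
      (G.biUnion K).Nonempty ∧ (∑ i ∈ G, y i = ∑ t ∈ G.biUnion K, x t) ∧
      (∑ i ∈ G, b.get i) ∈ c := by
    intro G hG
    have hmem : (∑ i ∈ G, b.get i) ∈ Hindman.FS b := Hindman.FS.finset_sum b G hG
    have hc : (∑ i ∈ G, b.get i) ∈ c := hb hmem
    obtain ⟨K', hK', hrep⟩ := FS_mem_rep (hcsub hc)
    have hn : ∑ i ∈ G, y i = ∑ t ∈ K', x t := by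
      have := congrArg NF.n hrep
      rw [NF.sum_n, NF.sum_n] at this
      exact this
    have hH : G.biUnion K = K' := by
      have := congrArg NF.H hrep
      rw [NF.sum_H, NF.sum_H] at this
      simpa [ha, hK, Stream'.get, Finset.biUnion_singleton_eq_self] using this
    exact ⟨hH ▸ hK', by rw [hn, hH], hc⟩
  have hKne : ∀ i, (K i).Nonempty := by
    intro i
    have := (claim {i} (Finset.singleton_nonempty i)).1
    simpa using this
  have hyi : ∀ i, y i = ∑ t ∈ K i, x t := by
    intro i
    have := (claim {i} (Finset.singleton_nonempty i)).2.1
    simpa using this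
  have hypos : ∀ i, 0 < y i := by
    intro i
    rw [hyi i]
    exact Finset.sum_pos (fun t _ => hx t) (hKne i)
  -- FS y ⊆ FS x in all cases
  have hFSsub : FS y ⊆ FS x := by
    rintro n ⟨G, hG, rfl⟩
    exact ⟨G.biUnion K, (claim G hG).1, (claim G hG).2.1⟩
  -- rule out c = c2 using IP*
  have hcc1 : c = c1 := by
    rcases hcs with rfl | rfl
    · rfl
    · exfalso
      obtain ⟨n, hnA, G, hG, rfl⟩ := hA y hypos
      have := (claim G hG).2.2
      rw [hc2] at this
      have hn2 : (∑ i ∈ G, b.get i).n = ∑ i ∈ G, y i := NF.sum_n G _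
      exact this.2 (hn2 ▸ hnA)
  -- the answer
  refine ⟨K, hKne, ?_, ?_, ?_⟩
  · intro i j hij
    have h2 := (claim {i, j} ⟨i, by simp⟩).2.1
    rw [Finset.sum_pair hij, Finset.biUnion_insert, Finset.singleton_biUnion] at h2
    have hsum := Finset.sum_union_inter (s₁ := K i) (s₂ := K j) (f := x)
    rw [hyi i, hyi j] at h2
    have hinter : ∑ t ∈ K i ∩ K j, x t = 0 := by omega
    rw [Finset.disjoint_iff_inter_eq_empty]
    by_contra hne
    obtain ⟨t, ht⟩ := Finset.nonempty_iff_ne_empty.mpr hne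
    have := Finset.sum_pos (f := x) (s := K i ∩ K j) (fun u _ => hx u) ⟨t, ht⟩
    omega
  · have : (fun i => ∑ t ∈ K i, x t) = y := by
      funext i; exact (hyi i).symm
    rw [this]; exact hFSsub
  · have : (fun i => ∑ t ∈ K i, x t) = y := by
      funext i; exact (hyi i).symm
    rw [this]
    rintro n ⟨G, hG, rfl⟩
    have := (claim G hG).2.2
    rw [hcc1, hc1] at this
    have hn2 : (∑ i ∈ G, b.get i).n = ∑ i ∈ G, y i := NF.sum_n G _
    exact hn2 ▸ this.2
end

section
/- The intersection of finitely many IP*-subsets of ℕ is again an IP*-set. -/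
lemma hindmanFS_subset_FS (a : Stream' ℕ) : Hindman.FS a ⊆ FS (fun n => a.get n) := by
  intro m hm
  induction hm with
  | head' a => exact ⟨{0}, Finset.singleton_nonempty 0, by simp [Stream'.head]⟩
  | tail' a m h ih =>
    obtain ⟨H, hne, hsum⟩ := ih
    refine ⟨H.image (· + 1), hne.image _, ?_⟩
    rw [Finset.sum_image (by intro x _ y _ h; simp only at h; omega)]
    simpa [Stream'.tail, Stream'.get] using hsum
  | cons' a m h ih =>
    obtain ⟨H, hne, hsum⟩ := ih
    refine ⟨insert 0 (H.image (· + 1)), Finset.insert_nonempty _ _, ?_⟩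
    rw [Finset.sum_insert (by simp), Finset.sum_image (by intro x _ y _ h; simp only at h; omega), hsum]
    rfl

lemma FS_subset_hindmanFS (a : Stream' ℕ) : FS (fun n => a.get n) ⊆ Hindman.FS a := by
  rintro m ⟨H, hne, rfl⟩
  exact Hindman.FS.finset_sum a H hne

lemma main_aux (n : ℕ) (A : Fin n → Set ℕ) (hA : ∀ i, IPStar (A i)) (b : Stream' ℕ)
    (hb : ∀ k, 0 < b.get k) :
    ∃ c : Stream' ℕ, (∀ k, 0 < c.get k) ∧ Hindman.FS c ⊆ (⋂ i, A i) ∩ Hindman.FS b := by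
  induction n generalizing b with
  | zero =>
    exact ⟨b, hb, by simp [Set.iInter_of_empty]⟩
  | succ n ih =>
    -- partition FS b by A 0
    obtain ⟨c₀, hc₀s, c, hc⟩ :=
      Hindman.FS_partition_regular b {A 0 ∩ Hindman.FS b, (A 0)ᶜ ∩ Hindman.FS b}
        (Set.toFinite _)
        (by intro m hm
            by_cases h : m ∈ A 0
            · exact ⟨A 0 ∩ Hindman.FS b, by simp, h, hm⟩
            · exact ⟨(A 0)ᶜ ∩ Hindman.FS b, by simp, h, hm⟩)
    have hcsubb : Hindman.FS c ⊆ Hindman.FS b := by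
      rcases hc₀s with rfl | rfl <;> exact hc.trans Set.inter_subset_right
    have hcpos : ∀ k, 0 < c.get k := by
      intro k
      have : c.get k ∈ Hindman.FS c := Hindman.FS.singleton c k
      obtain ⟨H, hne, hsum⟩ := hindmanFS_subset_FS b (hcsubb this)
      rw [hsum]
      obtain ⟨t, ht⟩ := hne
      exact Finset.sum_pos' (fun i _ => Nat.zero_le _) ⟨t, ht, hb t⟩
    have hcA : Hindman.FS c ⊆ A 0 := by
      rcases hc₀s with rfl | rfl
      · exact hc.trans Set.inter_subset_left
      · exfalso
        obtain ⟨m, hmA, hmFS⟩ := hA 0 (fun n => c.get n) hcpos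
        exact (hc.trans Set.inter_subset_left) (FS_subset_hindmanFS c hmFS) hmA
    obtain ⟨d, hdpos, hd⟩ := ih (fun i => A i.succ) (fun i => hA i.succ) c hcpos
    refine ⟨d, hdpos, fun m hm => ?_⟩
    obtain ⟨hm1, hm2⟩ := hd hm
    refine ⟨?_, hcsubb hm2⟩
    rw [Set.mem_iInter]
    intro i
    rcases Fin.eq_zero_or_eq_succ i with rfl | ⟨j, rfl⟩
    · exact hcA hm2
    · exact Set.mem_iInter.mp hm1 j

theorem iInter_IPStar (n : ℕ) (A : Fin n → Set ℕ) (hA : ∀ i, IPStar (A i)) :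
    IPStar (⋂ i, A i) := by
  intro x hx
  obtain ⟨c, hcpos, hc⟩ := main_aux n A hA x hx
  have h0 : c.get 0 ∈ Hindman.FS c := Hindman.FS.singleton c 0
  obtain ⟨h1, h2⟩ := hc h0
  exact ⟨c.get 0, h1, hindmanFS_subset_FS x h2⟩
end

section
/- The intersection of two IP*-subsets of ℕ is an IP*-set. -/
lemma hindmanFS_subset (a : Stream' ℕ) : Hindman.FS a ⊆ FS a.get := by
  intro m hm
  induction hm with
  | head' a => exact ⟨{0}, Finset.singleton_nonempty 0, by rw [Finset.sum_singleton]⟩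
  | tail' a m h ih =>
      obtain ⟨H, hH, rfl⟩ := ih
      refine ⟨H.image (· + 1), hH.image _, ?_⟩
      rw [Finset.sum_image (by intro i _ j _ h; simpa using h)]
      rfl
  | cons' a m h ih =>
      obtain ⟨H, hH, rfl⟩ := ih
      refine ⟨insert 0 (H.image (· + 1)), Finset.insert_nonempty _ _, ?_⟩
      rw [Finset.sum_insert (by simp), Finset.sum_image (by intro i _ j _ h; simpa using h)]
      rfl

lemma subset_hindmanFS (a : Stream' ℕ) : FS a.get ⊆ Hindman.FS a := by
  rintro m ⟨H, hH, rfl⟩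
  exact Hindman.FS.finset_sum a H hH

theorem inter_IPStar (A B : Set ℕ) (hA : IPStar A) (hB : IPStar B) :
    IPStar (A ∩ B) := by
  intro x hx
  let a : Stream' ℕ := x
  have hax : a.get = x := rfl
  have hcov : Hindman.FS a ⊆ ⋃₀ {A ∩ FS x, Aᶜ ∩ FS x} := by
    intro m hm
    have hmFS : m ∈ FS x := hax ▸ hindmanFS_subset a hm
    by_cases hmA : m ∈ A
    · exact ⟨A ∩ FS x, by simp, hmA, hmFS⟩
    · exact ⟨Aᶜ ∩ FS x, by simp, hmA, hmFS⟩
  obtain ⟨c, hc, b, hb⟩ := Hindman.FS_partition_regular a {A ∩ FS x, Aᶜ ∩ FS x}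
    (Set.Finite.insert _ (Set.finite_singleton _)) hcov
  have hcsub : c ⊆ FS x := by
    rcases hc with rfl | rfl
    · exact Set.inter_subset_right
    · exact Set.inter_subset_right
  have hbFS : FS b.get ⊆ c := (subset_hindmanFS b).trans hb
  have hbpos : ∀ n, 0 < b.get n := by
    intro n
    have : b.get n ∈ FS x := hcsub (hb (Hindman.FS.singleton b n))
    obtain ⟨H, hH, hsum⟩ := this
    obtain ⟨t, ht⟩ := hH
    have h1 := Finset.single_le_sum (f := x) (fun i _ => (hx i).le) ht
    have h2 := hx t
    omega
  -- c must be A ∩ FS x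
  have hcA : c = A ∩ FS x := by
    obtain ⟨n, hnA, hnFS⟩ := hA b.get hbpos
    rcases hc with rfl | rfl
    · rfl
    · exact absurd hnA (hbFS hnFS).1
  obtain ⟨m, hmB, hmFS⟩ := hB b.get hbpos
  have hm : m ∈ A ∩ FS x := hcA ▸ hbFS hmFS
  exact ⟨m, ⟨hm.1, hmB⟩, hm.2⟩
end

section
/- If A ⊆ ℕ is an IP*-set and B ⊆ ℕ is an IP-set, then every positive rational number can be written as a/b with a ∈ A and b ∈ B; that is, ℚ_{>0} = {a/b : a ∈ A, b ∈ B}. -/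
theorem rat_eq_ratio_IPStar_IP (A B : Set ℕ) (hA : IPStar A)
    (hB : ∃ x : ℕ → ℕ, (∀ n, 0 < x n) ∧ B = FS x) :
    ∀ q : ℚ, 0 < q → ∃ a ∈ A, ∃ b ∈ B, q = (a : ℚ) / (b : ℚ) := by
  obtain ⟨x, hx, rfl⟩ := hB
  intro q hq
  set m : ℕ := q.num.toNat with hm_def
  set n : ℕ := q.den with hn_def
  have hn : 0 < n := q.pos
  have hqnum : 0 < q.num := Rat.num_pos.mpr hq
  have hm : 0 < m := by omega
  -- pigeonhole: after any start point, some interval has sum divisible by n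
  have key : ∀ s0 : ℕ, ∃ p : ℕ × ℕ, s0 ≤ p.1 ∧ p.1 < p.2 ∧ p.2 ≤ s0 + n ∧
      n ∣ ∑ t ∈ Finset.Ico p.1 p.2, x t := by
    intro s0
    have main : ∀ i j : ℕ, i < j → j ≤ n →
        (∑ t ∈ Finset.Ico s0 (s0 + i), x t) % n = (∑ t ∈ Finset.Ico s0 (s0 + j), x t) % n →
        ∃ p : ℕ × ℕ, s0 ≤ p.1 ∧ p.1 < p.2 ∧ p.2 ≤ s0 + n ∧
          n ∣ ∑ t ∈ Finset.Ico p.1 p.2, x t := by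
      intro i j hij hjn heq
      refine ⟨(s0 + i, s0 + j), by omega, by omega, by omega, ?_⟩
      have hsplit : ∑ t ∈ Finset.Ico s0 (s0 + i), x t
          + ∑ t ∈ Finset.Ico (s0 + i) (s0 + j), x t
          = ∑ t ∈ Finset.Ico s0 (s0 + j), x t :=
        Finset.sum_Ico_consecutive _ (by omega) (by omega)
      have hle : ∑ t ∈ Finset.Ico s0 (s0 + i), x t ≤ ∑ t ∈ Finset.Ico s0 (s0 + j), x t := by
        omega
      have hdv := (Nat.modEq_iff_dvd' hle).mp heq
      have hc : ∑ t ∈ Finset.Ico (s0 + i) (s0 + j), x t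
          = ∑ t ∈ Finset.Ico s0 (s0 + j), x t - ∑ t ∈ Finset.Ico s0 (s0 + i), x t := by
        omega
      rw [hc]; exact hdv
    have hmap : ∀ j ∈ Finset.range (n + 1),
        (∑ t ∈ Finset.Ico s0 (s0 + j), x t) % n ∈ Finset.range n := by
      intro j _; exact Finset.mem_range.mpr (Nat.mod_lt _ hn)
    obtain ⟨i, hi, j, hj, hij, heq⟩ :=
      Finset.exists_ne_map_eq_of_card_lt_of_maps_to (by simp) hmap
    rcases Nat.lt_or_ge i j with h | h
    · exact main i j h (by simpa using Nat.lt_succ_iff.mp (Finset.mem_range.mp hj)) heq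
    · exact main j i (by omega) (Nat.lt_succ_iff.mp (Finset.mem_range.mp hi)) heq.symm
  choose f hf1 hf2 hf3 hf4 using key
  set l : ℕ → ℕ := fun k => (f (k * (n + 1))).1 with hl_def
  set r : ℕ → ℕ := fun k => (f (k * (n + 1))).2 with hr_def
  set s : ℕ → ℕ := fun k => ∑ t ∈ Finset.Ico (l k) (r k), x t with hs_def
  have hlk : ∀ k, k * (n + 1) ≤ l k := fun k => hf1 _
  have hlr : ∀ k, l k < r k := fun k => hf2 _
  have hrk : ∀ k, r k ≤ k * (n + 1) + n := fun k => hf3 _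
  have hdvd : ∀ k, n ∣ s k := fun k => hf4 _
  have hspos : ∀ k, 0 < s k := by
    intro k
    apply Finset.sum_pos (fun t _ => hx t)
    exact ⟨l k, Finset.mem_Ico.mpr ⟨le_refl _, hlr k⟩⟩
  set y : ℕ → ℕ := fun k => m * s k / n with hy_def
  have hydvd : ∀ k, n ∣ m * s k := fun k => Dvd.dvd.mul_left (hdvd k) m
  have hy : ∀ k, 0 < y k := by
    intro k
    apply Nat.div_pos _ hn
    calc n ≤ s k := Nat.le_of_dvd (hspos k) (hdvd k)
      _ ≤ m * s k := Nat.le_mul_of_pos_left _ hm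
  obtain ⟨a, haA, H, hHne, haFS⟩ := hA y hy
  -- blocks are pairwise disjoint
  have hdisj : (↑H : Set ℕ).PairwiseDisjoint (fun k => Finset.Ico (l k) (r k)) := by
    have aux : ∀ k1 k2 : ℕ, k1 < k2 → Disjoint (Finset.Ico (l k1) (r k1)) (Finset.Ico (l k2) (r k2)) := by
      intro k1 k2 hlt
      rw [Finset.disjoint_left]
      intro t ht1 ht2
      have h1 := Finset.mem_Ico.mp ht1
      have h2 := Finset.mem_Ico.mp ht2
      have e1 := hrk k1
      have e2 := hlk k2
      have e3 : (k1 + 1) * (n + 1) ≤ k2 * (n + 1) := Nat.mul_le_mul_right _ hlt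
      have e4 : (k1 + 1) * (n + 1) = k1 * (n + 1) + (n + 1) := by ring
      omega
    intro k1 _ k2 _ hne
    rcases Nat.lt_or_ge k1 k2 with h | h
    · exact aux k1 k2 h
    · exact (aux k2 k1 (by omega)).symm
  set b : ℕ := ∑ k ∈ H, s k with hb_def
  have hbFS : b ∈ FS x := by
    refine ⟨H.biUnion (fun k => Finset.Ico (l k) (r k)), ?_, ?_⟩
    · obtain ⟨k, hk⟩ := hHne
      exact ⟨l k, Finset.mem_biUnion.mpr ⟨k, hk, Finset.mem_Ico.mpr ⟨le_refl _, hlr k⟩⟩⟩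
    · rw [Finset.sum_biUnion hdisj]
  have hbpos : 0 < b := by
    obtain ⟨k, hk⟩ := hHne
    exact Finset.sum_pos (fun k _ => hspos k) ⟨k, hk⟩
  refine ⟨a, haA, b, hbFS, ?_⟩
  have hna : n * a = m * b := by
    rw [haFS, Finset.mul_sum, hb_def, Finset.mul_sum]
    refine Finset.sum_congr rfl fun k _ => ?_
    exact Nat.mul_div_cancel' (hydvd k)
  have hcast : (m : ℚ) = (q.num : ℚ) := by
    rw [hm_def]; exact_mod_cast congrArg (Int.cast : ℤ → ℚ) (Int.toNat_of_nonneg hqnum.le)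
  have hq_eq : q = (m : ℚ) / (n : ℚ) := by
    rw [hcast, hn_def]; exact (Rat.num_div_den q).symm
  rw [hq_eq]
  rw [div_eq_div_iff (by exact_mod_cast hn.ne' : (n : ℚ) ≠ 0) (by exact_mod_cast hbpos.ne' : (b : ℚ) ≠ 0)]
  have : (n : ℚ) * a = m * b := by exact_mod_cast hna
  linarith
end

section
/- Assume the set K of Kronecker numbers is a Δ_721*-set. Then the lower asymptotic density of K among all positive even numbers is at least (1/360)·∏_{p ≤ 720, p prime} (1 - 1/p). -/
def KroneckerSet : Set ℕ :=
  {n | 0 < n ∧ Even n ∧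
    {pq : ℕ × ℕ | pq.1.Prime ∧ pq.2.Prime ∧ pq.1 - pq.2 = n}.Infinite}

open Filter Finset

/-- Combinatorial core: from the Δ₇₂₁* property, `[1,N]` is covered by a maximal
K-free set of size ≤ 720 together with its translates by elements of `K ∩ [1,N]`. -/
lemma kronecker_count (hK : ∀ S : Finset ℕ, 721 ≤ S.card →
      ∃ d ∈ KroneckerSet, ∃ x ∈ S, ∃ y ∈ S, y < x ∧ d = x - y) (N : ℕ) :
    N ≤ 720 + 1440 * (KroneckerSet ∩ Set.Icc 1 N).ncard := by
  classical
  set Kf : Finset ℕ :=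
    ((Set.finite_Icc 1 N).inter_of_right KroneckerSet).toFinset with hKf
  have hKfmem : ∀ k, k ∈ Kf ↔ k ∈ KroneckerSet ∧ k ∈ Set.Icc 1 N := by
    intro k; simp [hKf, Set.Finite.mem_toFinset, Set.mem_inter_iff]
  -- family of K-free subsets of [1, N]
  set Free : Finset ℕ → Prop :=
    fun A => ∀ x ∈ A, ∀ y ∈ A, y < x → x - y ∉ KroneckerSet with hFree
  set 𝒜 : Finset (Finset ℕ) :=
    (Finset.Icc 1 N).powerset.filter Free with h𝒜
  have h𝒜ne : 𝒜.Nonempty := ⟨∅, by simp [h𝒜, hFree]⟩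
  obtain ⟨A, hA𝒜, hAmax⟩ := Finset.exists_max_image 𝒜 Finset.card h𝒜ne
  have hAsub : A ⊆ Finset.Icc 1 N := by
    have := (Finset.mem_filter.mp hA𝒜).1; exact Finset.mem_powerset.mp this
  have hAfree : Free A := (Finset.mem_filter.mp hA𝒜).2
  -- size bound
  have hAcard : A.card ≤ 720 := by
    by_contra h
    obtain ⟨d, hd, x, hx, y, hy, hxy, hdxy⟩ := hK A (by omega)
    exact hAfree x hx y hy hxy (hdxy ▸ hd)
  -- coverage
  have cover : Finset.Icc 1 N ⊆
      A ∪ ((A ×ˢ Kf).image (fun p => p.1 + p.2))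
        ∪ ((A ×ˢ Kf).image (fun p => p.1 - p.2)) := by
    intro x hx
    by_cases hxA : x ∈ A
    · simp [hxA]
    · have hBsub : insert x A ⊆ Finset.Icc 1 N := by
        intro z hz; rcases Finset.mem_insert.mp hz with h | h
        · exact h ▸ hx
        · exact hAsub h
      have hBnot : ¬ Free (insert x A) := by
        intro hBfree
        have hB𝒜 : insert x A ∈ 𝒜 :=
          Finset.mem_filter.mpr ⟨Finset.mem_powerset.mpr hBsub, hBfree⟩
        have := hAmax _ hB𝒜
        rw [Finset.card_insert_of_notMem hxA] at this
        omega
      simp only [hFree, not_forall] at hBnot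
      obtain ⟨u, hu, v, hv, huv, hK'⟩ := hBnot
      rw [not_not] at hK'
      have hx1 : 1 ≤ x := (Finset.mem_Icc.mp hx).1
      have hxN : x ≤ N := (Finset.mem_Icc.mp hx).2
      rcases Finset.mem_insert.mp hu with hu' | hu' <;>
        rcases Finset.mem_insert.mp hv with hv' | hv'
      · omega
      · -- u = x, v ∈ A : x = v + (x - v)
        rw [hu'] at hK' huv
        have hk : x - v ∈ Kf := by
          rw [hKfmem]; exact ⟨hK', by simp [Set.mem_Icc]; omega⟩
        have : x ∈ (A ×ˢ Kf).image (fun p => p.1 + p.2) :=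
          Finset.mem_image.mpr ⟨(v, x - v), Finset.mem_product.mpr ⟨hv', hk⟩, by simp; omega⟩
        simp [this]
      · -- v = x, u ∈ A : x = u - (u - x)
        rw [hv'] at hK' huv
        have huN : u ≤ N := (Finset.mem_Icc.mp (hAsub hu')).2
        have hk : u - x ∈ Kf := by
          rw [hKfmem]; exact ⟨hK', by simp [Set.mem_Icc]; omega⟩
        have : x ∈ (A ×ˢ Kf).image (fun p => p.1 - p.2) :=
          Finset.mem_image.mpr ⟨(u, u - x), Finset.mem_product.mpr ⟨hu', hk⟩, by simp; omega⟩
        simp [this]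
      · exact absurd (hAfree u hu' v hv' huv) (not_not.mpr hK')
  have hcard := Finset.card_le_card cover
  have h1 : ((A ×ˢ Kf).image (fun p : ℕ × ℕ => p.1 + p.2)).card ≤ A.card * Kf.card := by
    calc _ ≤ (A ×ˢ Kf).card := Finset.card_image_le
    _ = A.card * Kf.card := Finset.card_product A Kf
  have h2 : ((A ×ˢ Kf).image (fun p : ℕ × ℕ => p.1 - p.2)).card ≤ A.card * Kf.card := by
    calc _ ≤ (A ×ˢ Kf).card := Finset.card_image_le
    _ = A.card * Kf.card := Finset.card_product A Kf
  have hN : (Finset.Icc 1 N).card = N := by simp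
  have hKcard : (KroneckerSet ∩ Set.Icc 1 N).ncard = Kf.card := by
    exact Set.ncard_eq_toFinset_card _ ((Set.finite_Icc 1 N).inter_of_right KroneckerSet)
  have := Finset.card_union_le (A ∪ (A ×ˢ Kf).image (fun p : ℕ × ℕ => p.1 + p.2))
      ((A ×ˢ Kf).image (fun p : ℕ × ℕ => p.1 - p.2))
  have := Finset.card_union_le A ((A ×ˢ Kf).image (fun p : ℕ × ℕ => p.1 + p.2))
  have hKle : A.card * Kf.card ≤ 720 * Kf.card := Nat.mul_le_mul_right _ hAcard
  rw [hKcard]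
  omega

theorem kronecker_density (hK : ∀ S : Finset ℕ, 721 ≤ S.card →
      ∃ d ∈ KroneckerSet, ∃ x ∈ S, ∃ y ∈ S, y < x ∧ d = x - y) :
    ((1 : ℝ) / 360) * ∏ p ∈ (Finset.Icc 1 720).filter Nat.Prime, (1 - 1 / (p : ℝ))
      ≤ Filter.liminf
          (fun N : ℕ => (Nat.card ↥(KroneckerSet ∩ Set.Icc 1 N) : ℝ) / ((N : ℝ) / 2))
          Filter.atTop := by
  classical
  set f : ℕ → ℝ :=
    fun N => (Nat.card ↥(KroneckerSet ∩ Set.Icc 1 N) : ℝ) / ((N : ℝ) / 2) with hf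
  have hcardle : ∀ N : ℕ, (KroneckerSet ∩ Set.Icc 1 N).ncard ≤ N := by
    intro N
    calc (KroneckerSet ∩ Set.Icc 1 N).ncard ≤ (Set.Icc 1 N).ncard :=
          Set.ncard_le_ncard Set.inter_subset_right (Set.finite_Icc 1 N)
    _ = N := by rw [← Finset.coe_Icc, Set.ncard_coe_finset, Nat.card_Icc]; omega
  -- f is bounded above by 2
  have hfle : ∀ N, f N ≤ 2 := by
    intro N
    rcases Nat.eq_zero_or_pos N with h0 | h0
    · simp [hf, h0]
    · have hN : (0 : ℝ) < (N : ℝ) / 2 := by positivity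
      rw [hf, div_le_iff₀ hN, Nat.card_coe_set_eq]
      have := hcardle N
      have : ((KroneckerSet ∩ Set.Icc 1 N).ncard : ℝ) ≤ (N : ℝ) := by exact_mod_cast this
      linarith
  have hcobdd : Filter.IsCoboundedUnder (· ≥ ·) Filter.atTop f :=
    Filter.IsBoundedUnder.isCoboundedUnder_ge ⟨2, Filter.eventually_map.mpr
      (Filter.Eventually.of_forall hfle)⟩
  -- eventual lower bound 1/1080
  have hev : ∀ᶠ N in Filter.atTop, (1 : ℝ) / 1080 ≤ f N := by
    filter_upwards [Filter.eventually_ge_atTop 2160] with N hN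
    have hcount := kronecker_count hK N
    have hN0 : (0 : ℝ) < (N : ℝ) / 2 := by
      have : (0:ℕ) < N := by omega
      have : (0:ℝ) < (N:ℝ) := by exact_mod_cast this
      positivity
    rw [hf, le_div_iff₀ hN0, Nat.card_coe_set_eq]
    have hm : ((N : ℝ) - 720) / 1440 ≤ ((KroneckerSet ∩ Set.Icc 1 N).ncard : ℝ) := by
      have : (N : ℝ) ≤ 720 + 1440 * ((KroneckerSet ∩ Set.Icc 1 N).ncard : ℝ) := by
        exact_mod_cast hcount
      linarith
    have hN' : (2160 : ℝ) ≤ (N : ℝ) := by exact_mod_cast hN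
    nlinarith
  have hliminf : (1 : ℝ) / 1080 ≤ Filter.liminf f Filter.atTop :=
    Filter.le_liminf_of_le hcobdd hev
  -- the product is at most 1/3
  have hsub : ({2, 3} : Finset ℕ) ⊆ (Finset.Icc 1 720).filter Nat.Prime := by
    intro p hp
    fin_cases hp <;> simp [Nat.prime_two, Nat.prime_three]
  have hnonneg : ∀ p ∈ (Finset.Icc 1 720).filter Nat.Prime, (0:ℝ) ≤ 1 - 1 / (p : ℝ) := by
    intro p hp
    have hp2 : 2 ≤ p := (Finset.mem_filter.mp hp).2.two_le
    have hp2' : (2:ℝ) ≤ (p:ℝ) := by exact_mod_cast hp2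
    have : 1 / (p:ℝ) ≤ 1 / 2 := by
      apply one_div_le_one_div_of_le <;> linarith
    linarith
  have hprod : ∏ p ∈ (Finset.Icc 1 720).filter Nat.Prime, (1 - 1 / (p : ℝ)) ≤ 1 / 3 := by
    rw [← Finset.prod_sdiff hsub]
    have h23 : ∏ p ∈ ({2, 3} : Finset ℕ), (1 - 1 / (p : ℝ)) = 1 / 3 := by norm_num
    rw [h23]
    have hrest : ∏ p ∈ (Finset.Icc 1 720).filter Nat.Prime \ {2, 3}, (1 - 1 / (p : ℝ)) ≤ 1 :=
      Finset.prod_le_one (fun p hp => hnonneg p (Finset.mem_sdiff.mp hp).1)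
        (fun p hp => by
          have hp2 : 2 ≤ p := (Finset.mem_filter.mp (Finset.mem_sdiff.mp hp).1).2.two_le
          have : (0:ℝ) < (p:ℝ) := by positivity
          have : (0:ℝ) ≤ 1 / (p:ℝ) := by positivity
          linarith)
    nlinarith [Finset.prod_nonneg
      (fun p hp => hnonneg p (Finset.mem_sdiff.mp hp).1) (s := (Finset.Icc 1 720).filter Nat.Prime \ {2, 3})]
  have hprodnn : (0:ℝ) ≤ ∏ p ∈ (Finset.Icc 1 720).filter Nat.Prime, (1 - 1 / (p : ℝ)) :=
    Finset.prod_nonneg hnonneg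
  calc ((1 : ℝ) / 360) * ∏ p ∈ (Finset.Icc 1 720).filter Nat.Prime, (1 - 1 / (p : ℝ))
      ≤ (1 / 360) * (1 / 3) := by nlinarith
    _ = 1 / 1080 := by norm_num
    _ ≤ _ := hliminf
end

section
/- Assume the set K of Kronecker numbers is a Δ_721*-set, and suppose D = {d_1, ..., d_720} is a set of positive integers and k a positive integer such that for every j with 1 ≤ j ≤ 720, j·d_j = k. Then for every positive integer b, k·b ∈ D·K = {d·x : d ∈ D, x ∈ K}. -/
/-- The paper's `Δ_r*`-sets. -/
def IsDeltaStarSet (r : ℕ) (A : Set ℕ) : Prop :=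
  ∀ S : Finset ℕ, r ≤ S.card → ∃ d ∈ A, ∃ x ∈ S, ∃ y ∈ S, y < x ∧ d = x - y

/-- Apply the `Δ_{r+1}*` property to the progression `0, b, 2b, …, rb`. -/
theorem IsDeltaStarSet.exists_mul_mem {r : ℕ} {A : Set ℕ} (hA : IsDeltaStarSet (r + 1) A)
    {b : ℕ} (hb : 0 < b) : ∃ j ∈ Finset.Icc 1 r, j * b ∈ A := by
  have hinj : Function.Injective (· * b) := fun _ _ h => Nat.eq_of_mul_eq_mul_right hb h
  obtain ⟨c, hcA, x, hx, y, hy, hyx, rfl⟩ :=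
    hA ((Finset.range (r + 1)).image (· * b)) (by rw [Finset.card_image_of_injective _ hinj]; simp)
  simp only [Finset.mem_image, Finset.mem_range] at hx hy
  obtain ⟨i, hi, rfl⟩ := hx
  obtain ⟨i', hi', rfl⟩ := hy
  have hii' : i' < i := lt_of_mul_lt_mul_right' hyx
  refine ⟨i - i', Finset.mem_Icc.2 ⟨by omega, by omega⟩, ?_⟩
  rwa [Nat.sub_mul]

theorem product_representation_general (hK : ∀ S : Finset ℕ, 721 ≤ S.card →
      ∃ d ∈ KroneckerSet, ∃ x ∈ S, ∃ y ∈ S, y < x ∧ d = x - y)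
    (d : ℕ → ℕ) (k : ℕ)
    (hjd : ∀ j ∈ Finset.Icc 1 720, j * d j = k) :
    ∀ b : ℕ, 0 < b → ∃ j ∈ Finset.Icc 1 720, ∃ x ∈ KroneckerSet, k * b = d j * x := by
  intro b hb
  obtain ⟨j, hj, hjb⟩ := IsDeltaStarSet.exists_mul_mem (r := 720) hK hb
  refine ⟨j, hj, j * b, hjb, ?_⟩
  rw [← hjd j hj, mul_comm j, mul_assoc]

theorem product_representation (hK : ∀ S : Finset ℕ, 721 ≤ S.card →
      ∃ d ∈ KroneckerSet, ∃ x ∈ S, ∃ y ∈ S, y < x ∧ d = x - y)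
    (d : ℕ → ℕ) (k : ℕ) (hk : 0 < k) (hd : ∀ j ∈ Finset.Icc 1 720, 0 < d j)
    (hjd : ∀ j ∈ Finset.Icc 1 720, j * d j = k) :
    ∀ b : ℕ, 0 < b → ∃ j ∈ Finset.Icc 1 720, ∃ x ∈ KroneckerSet, k * b = d j * x :=
  product_representation_general hK d k hjd
end

section
/- If A ⊆ ℕ is an IP*-set, then A contains an IP-set, i.e. there is a sequence ⟨y_n⟩ of positive integers with FS(⟨y_n⟩) ⊆ A. -/
lemma fs_pos : ∀ {a : Stream' ℕ} {m : ℕ}, m ∈ Hindman.FS a → (∀ n, 0 < a.get n) → 0 < m := by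
  intro a m hm
  induction hm with
  | head' a => intro ha; exact ha 0
  | tail' a m h ih => intro ha; exact ih fun n => ha (n + 1)
  | cons' a m h ih => intro ha; exact Nat.add_pos_left (ha 0) _

lemma fs_sub (b : Stream' ℕ) : FS b.get ⊆ Hindman.FS b := by
  rintro n ⟨H, hH, rfl⟩
  exact Hindman.FS.finset_sum b H hH

theorem IPStar_contains_IP (A : Set ℕ) (hA : IPStar A) :
    ∃ y : ℕ → ℕ, (∀ n, 0 < y n) ∧ FS y ⊆ A := by
  set a : Stream' ℕ := fun n => n + 1 with ha
  have hapos : ∀ n, 0 < a.get n := fun n => Nat.succ_pos n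
  obtain ⟨c, hc, b, hb⟩ := Hindman.FS_partition_regular a
      {A ∩ Set.Ici 1, Aᶜ ∩ Set.Ici 1} (Set.toFinite _) (by
    intro m hm
    have hp : 0 < m := fs_pos hm hapos
    by_cases hmA : m ∈ A
    · exact ⟨A ∩ Set.Ici 1, Or.inl rfl, hmA, hp⟩
    · exact ⟨Aᶜ ∩ Set.Ici 1, Or.inr rfl, hmA, hp⟩)
  have hbpos : ∀ n, 0 < b.get n := by
    intro n
    rcases hc with rfl | rfl
    · exact (hb (Hindman.FS.singleton b n)).2
    · exact (hb (Hindman.FS.singleton b n)).2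
  rcases hc with rfl | rfl
  · exact ⟨b.get, hbpos, fun n hn => (hb (fs_sub b hn)).1⟩
  · exfalso
    obtain ⟨m, hmA, hmFS⟩ := hA b.get hbpos
    exact (hb (fs_sub b hmFS)).1 hmA
end
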